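/- arXiv:2510.11908 — 5 statements merged into one kernel-verified Lean document; each statement's English description precedes it below -/
import Mathlib

section
/- An open connected set Ω ⊆ ℝⁿ is convex if and only if for every triangle (2-simplex, i.e., convex hull of three points), whenever two of its sides (edges) are contained in Ω, the whole triangle is contained in Ω. -/
/-- An open connected set `Ω ⊆ ℝⁿ` is convex iff for every triangle (convex hull of
three points), whenever two of its sides lie in `Ω`, the whole triangle lies in `Ω`. -/
theorem stmt_0 {n : ℕ} (Ω : Set (EuclideanSpace ℝ (Fin n)))
    (hopen : IsOpen Ω) (hconn : IsConnected Ω) :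
    Convex ℝ Ω ↔
      ∀ a b c : EuclideanSpace ℝ (Fin n),
        segment ℝ a b ⊆ Ω → segment ℝ a c ⊆ Ω →
        convexHull ℝ {a, b, c} ⊆ Ω := by
  constructor
  · intro hconv a b c hab hac
    apply convexHull_min _ hconv
    rintro p (rfl | rfl | rfl)
    · exact hab (left_mem_segment ℝ _ _)
    · exact hab (right_mem_segment ℝ _ _)
    · exact hac (right_mem_segment ℝ _ _)
  · intro h
    rw [convex_iff_segment_subset]
    intro x hx y hy
    set U : Set (EuclideanSpace ℝ (Fin n)) := {z | z ∈ Ω ∧ segment ℝ x z ⊆ Ω} with hU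
    have hUopen : IsOpen U := by
      rw [Metric.isOpen_iff]
      rintro z ⟨hzΩ, hseg⟩
      obtain ⟨ε, hε, hball⟩ := Metric.isOpen_iff.1 hopen z hzΩ
      refine ⟨ε, hε, fun w hw => ⟨hball hw, ?_⟩⟩
      have h1 : segment ℝ z x ⊆ Ω := by rw [segment_symm]; exact hseg
      have h2 : segment ℝ z w ⊆ Ω :=
        fun p hp => hball ((convex_ball z ε).segment_subset (Metric.mem_ball_self hε) hw hp)
      have hh := h z x w h1 h2
      exact fun p hp => hh (segment_subset_convexHull (by simp) (by simp) hp)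
    have hkey : Ω ⊆ U := by
      apply hconn.isPreconnected.subset_of_closure_inter_subset hUopen
      · exact ⟨x, hx, hx, by rw [segment_same]; exact Set.singleton_subset_iff.2 hx⟩
      · rintro z ⟨hzcl, hzΩ⟩
        obtain ⟨ε, hε, hball⟩ := Metric.isOpen_iff.1 hopen z hzΩ
        obtain ⟨w, hwU, hwz⟩ := Metric.mem_closure_iff.1 hzcl ε hε
        refine ⟨hzΩ, ?_⟩
        have h1 : segment ℝ w x ⊆ Ω := by rw [segment_symm]; exact hwU.2
        have h2 : segment ℝ w z ⊆ Ω :=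
          fun p hp => hball ((convex_ball z ε).segment_subset
            (by simpa [Metric.mem_ball, dist_comm] using hwz)
            (Metric.mem_ball_self hε) hp)
        have hh := h w x z h1 h2
        exact fun p hp => hh (segment_subset_convexHull (by simp) (by simp) hp)
    exact (hkey hy).2
end

section
/- The set Π = {(x,y,z,t) ∈ ℝ⁴ : y < x²} is open and two-convex: whenever three of the four faces of a 3-simplex lie in Π, the whole simplex lies in Π. -/
/-!
Membership in `Π` depends only on the image of a point under the projection
`π p = (p 0, p 1)` to the plane. Four points of the plane are affinely dependent, and moving the
barycentric weights of a point along such a dependency, as in Carathéodory's theorem, drives one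
weight to zero; choosing the direction of the move by the sign of the coefficient of `a`, that
weight is not the one of `a`. So `π` maps every point of the simplex to the image of a point of
one of the three faces through `a`. This works for any cylinder `π⁻¹(S)` over a planar set `S`.
-/

/-- An open set `Ω ⊆ ℝⁿ` is two-convex if for any 3-simplex (convex hull of four
affinely independent points), if three of its 2-dimensional faces are contained in `Ω`,
then the whole simplex is contained in `Ω`. -/
def TwoConvex {n : ℕ} (Ω : Set (EuclideanSpace ℝ (Fin n))) : Prop :=
  ∀ a b c d : EuclideanSpace ℝ (Fin n), AffineIndependent ℝ ![a, b, c, d] →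
    convexHull ℝ {a, b, c} ⊆ Ω → convexHull ℝ {a, b, d} ⊆ Ω →
    convexHull ℝ {a, c, d} ⊆ Ω →
    convexHull ℝ {a, b, c, d} ⊆ Ω

open Finset

section ConvexWeights

variable {𝕜 E ι : Type*} [Field 𝕜] [LinearOrder 𝕜] [IsStrictOrderedRing 𝕜]
  [AddCommGroup E] [Module 𝕜 E] [Fintype ι]

theorem mem_convexHull_range_iff_exists_sum {v : ι → E} {x : E} :
    x ∈ convexHull 𝕜 (Set.range v) ↔
      ∃ w : ι → 𝕜, (∀ i, 0 ≤ w i) ∧ ∑ i, w i = 1 ∧ ∑ i, w i • v i = x := by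
  classical
  rw [convexHull_range_eq_exists_affineCombination]
  constructor
  · rintro ⟨s, w, hw₀, hw₁, rfl⟩
    refine ⟨fun i => if i ∈ s then w i else 0, fun i => ?_, ?_, ?_⟩
    · by_cases hi : i ∈ s <;> simp [hi, hw₀ i]
    · rwa [sum_ite_mem, univ_inter]
    · simp only [ite_smul, zero_smul, sum_ite_mem, univ_inter]
      exact (s.affineCombination_eq_linear_combination v w hw₁).symm
  · rintro ⟨w, hw₀, hw₁, rfl⟩
    exact ⟨univ, w, fun i _ => hw₀ i, hw₁, univ.affineCombination_eq_linear_combination v w hw₁⟩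

theorem sum_smul_mem_convexHull_image_compl {v : ι → E} {w : ι → 𝕜} (hw₀ : ∀ i, 0 ≤ w i)
    (hw₁ : ∑ i, w i = 1) {j : ι} (hj : w j = 0) :
    ∑ i, w i • v i ∈ convexHull 𝕜 (v '' {j}ᶜ) := by
  classical
  have hsum : ∑ i ∈ univ.erase j, w i = 1 := by rwa [sum_erase _ hj]
  rw [← sum_erase _ (by rw [hj, zero_smul]), ← (univ.erase j).centerMass_eq_of_sum_1 v hsum]
  exact (univ.erase j).centerMass_mem_convexHull (fun i _ => hw₀ i) (by rw [hsum]; exact one_pos)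
    fun i hi => Set.mem_image_of_mem v (ne_of_mem_erase hi)

theorem exists_ne_nonneg_add_mul_eq_zero_of_nonpos {w c : ι → 𝕜} (hw : ∀ i, 0 ≤ w i)
    (hc : ∑ i, c i = 0) (hc₀ : c ≠ 0) {i₀ : ι} (hi₀ : c i₀ ≤ 0) :
    ∃ t : 𝕜, ∃ j ≠ i₀, (∀ i, 0 ≤ w i + t * c i) ∧ w j + t * c j = 0 := by
  classical
  have hpos : (univ.filter (0 < c ·)).Nonempty := by
    by_contra! h
    refine hc₀ (funext fun i => ?_)
    have hnonpos : ∀ i ∈ univ, c i ≤ 0 := fun i _ => by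
      simpa using filter_eq_empty_iff.1 h (mem_univ i)
    exact (sum_eq_zero_iff_of_nonpos hnonpos).1 hc i (mem_univ i)
  obtain ⟨j, hj, hmin⟩ := exists_min_image _ (fun i => w i / c i) hpos
  have hcj : 0 < c j := (mem_filter.1 hj).2
  refine ⟨-(w j / c j), j, fun h => (h ▸ hi₀).not_gt hcj, fun i => ?_, by field_simp; ring⟩
  rcases lt_or_ge 0 (c i) with hci | hci
  · have : w j / c j * c i ≤ w i := (le_div_iff₀ hci).1 (hmin i (mem_filter.2 ⟨mem_univ i, hci⟩))
    linarith
  · have : 0 ≤ -(w j / c j) * c i :=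
      mul_nonneg_of_nonpos_of_nonpos (neg_nonpos.2 (div_nonneg (hw j) hcj.le)) hci
    linarith [hw i]

theorem exists_ne_nonneg_add_mul_eq_zero {w c : ι → 𝕜} (hw : ∀ i, 0 ≤ w i)
    (hc : ∑ i, c i = 0) (hc₀ : c ≠ 0) (i₀ : ι) :
    ∃ t : 𝕜, ∃ j ≠ i₀, (∀ i, 0 ≤ w i + t * c i) ∧ w j + t * c j = 0 := by
  rcases le_total (c i₀) 0 with hi₀ | hi₀
  · exact exists_ne_nonneg_add_mul_eq_zero_of_nonpos hw hc hc₀ hi₀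
  · obtain ⟨t, j, hj, hnonneg, hzero⟩ := exists_ne_nonneg_add_mul_eq_zero_of_nonpos (c := -c) hw
      (by simp [hc]) (neg_ne_zero.2 hc₀) (by simpa using hi₀)
    exact ⟨-t, j, hj, fun i => by simpa using hnonneg i, by simpa using hzero⟩

theorem exists_ne_mem_convexHull_image_compl {p : ι → E} (hp : ¬AffineIndependent 𝕜 p) (i₀ : ι)
    {x : E} (hx : x ∈ convexHull 𝕜 (Set.range p)) : ∃ j ≠ i₀, x ∈ convexHull 𝕜 (p '' {j}ᶜ) := by
  obtain ⟨w, hw₀, hw₁, rfl⟩ := mem_convexHull_range_iff_exists_sum.1 hx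
  rw [affineIndependent_iff_of_fintype] at hp
  push Not at hp
  obtain ⟨c, hc, hcp, i₁, hci⟩ := hp
  rw [univ.weightedVSub_eq_linear_combination hc] at hcp
  obtain ⟨t, j, hj, hnonneg, hzero⟩ :=
    exists_ne_nonneg_add_mul_eq_zero hw₀ hc (fun h => hci (congrFun h i₁)) i₀
  refine ⟨j, hj, ?_⟩
  have hsum : ∑ i, (w i + t * c i) • p i = ∑ i, w i • p i := by
    simp only [add_smul, mul_smul, sum_add_distrib, ← smul_sum, hcp, smul_zero, add_zero]
  rw [← hsum]
  exact sum_smul_mem_convexHull_image_compl hnonneg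
    (by rw [sum_add_distrib, ← mul_sum, hc, mul_zero, add_zero, hw₁]) hzero

end ConvexWeights

theorem twoConvex_preimage {n : ℕ} {F : Type*} [AddCommGroup F] [Module ℝ F]
    [FiniteDimensional ℝ F] (hF : Module.finrank ℝ F ≤ 2)
    (π : EuclideanSpace ℝ (Fin n) →ₗ[ℝ] F) (S : Set F) : TwoConvex (π ⁻¹' S) := by
  intro a b c d _ habc habd hacd x hx
  set p := ![a, b, c, d]
  have hdep : ¬AffineIndependent ℝ (π ∘ p) := fun h => by
    have := h.card_le_finrank_succ.trans (Nat.add_le_add_right (Submodule.finrank_le _) 1)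
    rw [Fintype.card_fin] at this
    omega
  have hπx : π x ∈ convexHull ℝ (Set.range (π ∘ p)) := by
    rw [Set.range_comp, ← LinearMap.image_convexHull]
    refine Set.mem_image_of_mem π ?_
    rwa [Matrix.range_cons, Matrix.range_cons, Matrix.range_cons_cons_empty, Set.singleton_union,
      Set.singleton_union]
  obtain ⟨j, hj, hj'⟩ := exists_ne_mem_convexHull_image_compl hdep 0 hπx
  rw [Set.image_comp, ← LinearMap.image_convexHull] at hj'
  obtain ⟨y, hy, hyx⟩ := hj'
  have hface : convexHull ℝ (p '' {j}ᶜ) ⊆ π ⁻¹' S := by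
    fin_cases j
    · exact absurd rfl hj
    · refine (convexHull_mono ?_).trans hacd
      rintro _ ⟨i, hi, rfl⟩; fin_cases i <;> simp_all [p]
    · refine (convexHull_mono ?_).trans habd
      rintro _ ⟨i, hi, rfl⟩; fin_cases i <;> simp_all [p]
    · refine (convexHull_mono ?_).trans habc
      rintro _ ⟨i, hi, rfl⟩; fin_cases i <;> simp_all [p]
  exact Set.mem_preimage.2 (hyx ▸ hface hy)

/-- The set `Π = {(x,y,z,t) ∈ ℝ⁴ : y < x²}` is open and two-convex. -/
theorem stmt_1 :
    IsOpen {p : EuclideanSpace ℝ (Fin 4) | p 1 < (p 0) ^ 2} ∧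
      TwoConvex {p : EuclideanSpace ℝ (Fin 4) | p 1 < (p 0) ^ 2} := by
  let π : EuclideanSpace ℝ (Fin 4) →L[ℝ] ℝ × ℝ :=
    (EuclideanSpace.proj 0).prod (EuclideanSpace.proj 1)
  have hS : IsOpen {q : ℝ × ℝ | q.2 < q.1 ^ 2} := isOpen_lt (by fun_prop) (by fun_prop)
  exact ⟨hS.preimage π.continuous,
    twoConvex_preimage (by simp) π.toLinearMap {q : ℝ × ℝ | q.2 < q.1 ^ 2}⟩
end

section
/- The intersection of two two-convex open subsets of ℝⁿ is two-convex. -/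
/-- The intersection of two two-convex open subsets of `ℝⁿ` is two-convex. -/
theorem stmt_2 {n : ℕ} (Ω₁ Ω₂ : Set (EuclideanSpace ℝ (Fin n)))
    (h₁open : IsOpen Ω₁) (h₂open : IsOpen Ω₂)
    (h₁ : TwoConvex Ω₁) (h₂ : TwoConvex Ω₂) :
    TwoConvex (Ω₁ ∩ Ω₂) := by
  intro a b c d hind f1 f2 f3
  exact Set.subset_inter
    (h₁ a b c d hind (f1.trans Set.inter_subset_left)
      (f2.trans Set.inter_subset_left) (f3.trans Set.inter_subset_left))
    (h₂ a b c d hind (f1.trans Set.inter_subset_right)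
      (f2.trans Set.inter_subset_right) (f3.trans Set.inter_subset_right))
end

section
/- In ℝⁿ, there is no infinite subset of ℝⁿ all of whose triangles formed by three of its points are acute or right (all angles at most π/2). -/
open RealInnerProductSpace

/-- Every real sequence has a subsequence along which, for any `j < k < l`,
the middle value is between the outer values (in the product sense). -/
lemma stmt_8_aux_real (g : ℕ → ℝ) :
    ∃ φ : ℕ → ℕ, StrictMono φ ∧ ∀ j k l, j < k → k < l →
      (g (φ j) - g (φ k)) * (g (φ l) - g (φ k)) ≤ 0 := by
  obtain ⟨e, he | he⟩ := exists_increasing_or_nonincreasing_subseq ((· ≤ ·) : ℝ → ℝ → Prop) g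
  · refine ⟨e, e.strictMono, fun j k l hjk hkl => ?_⟩
    exact mul_nonpos_iff.2 (Or.inr ⟨sub_nonpos.2 (he j k hjk), sub_nonneg.2 (he k l hkl)⟩)
  · refine ⟨e, e.strictMono, fun j k l hjk hkl => ?_⟩
    exact mul_nonpos_iff.2 (Or.inl ⟨sub_nonneg.2 (le_of_lt (lt_of_not_ge (he j k hjk))),
      sub_nonpos.2 (le_of_lt (lt_of_not_ge (he k l hkl)))⟩)

/-- Iterating the previous lemma over the first `m` coordinates. -/
lemma stmt_8_aux_vec {n : ℕ} (f : ℕ → EuclideanSpace ℝ (Fin n)) (m : ℕ) :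
    ∃ φ : ℕ → ℕ, StrictMono φ ∧ ∀ i : Fin n, (i : ℕ) < m → ∀ j k l, j < k → k < l →
      (f (φ j) i - f (φ k) i) * (f (φ l) i - f (φ k) i) ≤ 0 := by
  induction m with
  | zero => exact ⟨id, strictMono_id, fun i hi => absurd hi (Nat.not_lt_zero _)⟩
  | succ m ih =>
    obtain ⟨φ, hφ, hprop⟩ := ih
    by_cases hm : m < n
    · obtain ⟨ψ, hψ, hψprop⟩ := stmt_8_aux_real (fun k => f (φ k) ⟨m, hm⟩)
      refine ⟨φ ∘ ψ, hφ.comp hψ, fun i hi j k l hjk hkl => ?_⟩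
      rcases Nat.lt_succ_iff_lt_or_eq.1 hi with hi' | hi'
      · exact hprop i hi' (ψ j) (ψ k) (ψ l) (hψ hjk) (hψ hkl)
      · have : i = ⟨m, hm⟩ := Fin.ext hi'
        subst this
        exact hψprop j k l hjk hkl
    · refine ⟨φ, hφ, fun i hi j k l hjk hkl => ?_⟩
      have : (i : ℕ) < m := lt_of_lt_of_le i.2 (Nat.not_lt.1 hm)
      exact hprop i this j k l hjk hkl

/-- Any set of points in `ℝⁿ` such that every triangle formed by three of them is acute
or right (at every vertex `a` one has `⟪b − a, c − a⟫ ≥ 0`) is finite: there is no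
infinite such subset of `ℝⁿ`. -/
theorem stmt_8 {n : ℕ} (S : Set (EuclideanSpace ℝ (Fin n)))
    (h : ∀ a ∈ S, ∀ b ∈ S, ∀ c ∈ S, a ≠ b → a ≠ c → b ≠ c →
      0 ≤ ⟪b - a, c - a⟫) :
    S.Finite := by
  by_contra hinf
  have hinf : S.Infinite := hinf
  set e := hinf.natEmbedding S with he
  set F : ℕ → EuclideanSpace ℝ (Fin n) := fun k => (e k : EuclideanSpace ℝ (Fin n)) with hF
  have hFinj : Function.Injective F := fun a b hab => e.injective (Subtype.ext hab)
  have hFmem : ∀ k, F k ∈ S := fun k => (e k).2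
  obtain ⟨φ, hφ, hprop⟩ := stmt_8_aux_vec F n
  set y : ℕ → EuclideanSpace ℝ (Fin n) := fun k => F (φ k) with hy
  have hyinj : Function.Injective y := hFinj.comp hφ.injective
  have hymem : ∀ k, y k ∈ S := fun k => hFmem (φ k)
  -- each coordinate product is zero for any j < k < l
  have key : ∀ (j k l : ℕ), j < k → k < l → ∀ i : Fin n,
      (y j i - y k i) * (y l i - y k i) = 0 := by
    intro j k l hjk hkl
    have hne1 : y k ≠ y j := fun hh => (Nat.ne_of_gt hjk) (hyinj hh)
    have hne2 : y k ≠ y l := fun hh => (Nat.ne_of_lt hkl) (hyinj hh)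
    have hne3 : y j ≠ y l := fun hh => (Nat.ne_of_lt (hjk.trans hkl)) (hyinj hh)
    have hin := h (y k) (hymem k) (y j) (hymem j) (y l) (hymem l) hne1 hne2 hne3
    have hsum : (0 : ℝ) ≤ ∑ i : Fin n, (y j i - y k i) * (y l i - y k i) := by
      have : ⟪y j - y k, y l - y k⟫ = ∑ i : Fin n, (y j i - y k i) * (y l i - y k i) := by
        rw [PiLp.inner_apply]
        refine Finset.sum_congr rfl fun i _ => ?_
        simp [RCLike.inner_apply, PiLp.sub_apply]
        ring
      rw [this] at hin
      exact hin
    have hterms : ∀ i ∈ Finset.univ, (y j i - y k i) * (y l i - y k i) ≤ 0 :=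
      fun i _ => hprop i i.2 j k l hjk hkl
    have hzero : ∑ i : Fin n, (y j i - y k i) * (y l i - y k i) = 0 :=
      le_antisymm (Finset.sum_nonpos hterms) hsum
    intro i
    exact (Finset.sum_eq_zero_iff_of_nonpos hterms).1 hzero i (Finset.mem_univ i)
  -- hence for 0 < k < N := 2^n + 2, each coordinate of y k equals that of y 0 or y N
  set N : ℕ := 2 ^ n + 2 with hN
  have hcoord : ∀ k, 0 < k → k < N → ∀ i : Fin n, y k i = y 0 i ∨ y k i = y N i := by
    intro k hk0 hkN i
    have := key 0 k N hk0 hkN i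
    rcases mul_eq_zero.1 this with hh | hh
    · exact Or.inl (by linarith [sub_eq_zero.1 hh])
    · exact Or.inr (sub_eq_zero.1 hh).symm
  -- pigeonhole: the map k ↦ (which endpoint each coordinate matches) on 2^n + 1 points
  set c : Fin (2 ^ n + 1) → (Fin n → Bool) :=
    fun k i => decide (y (k + 1) i = y 0 i) with hc
  have hcard : Fintype.card (Fin n → Bool) < Fintype.card (Fin (2 ^ n + 1)) := by
    simp [Fintype.card_fun]
  obtain ⟨k, k', hkk', hck⟩ := Fintype.exists_ne_map_eq_of_card_lt c hcard
  have hyeq : y (k + 1) = y (k' + 1) := by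
    have hk : ∀ (a : Fin (2 ^ n + 1)), 0 < (a : ℕ) + 1 ∧ (a : ℕ) + 1 < N := by
      intro a
      constructor
      · omega
      · have := a.2; omega
    ext i
    have h1 := hcoord (k + 1) (hk k).1 (hk k).2 i
    have h2 := hcoord (k' + 1) (hk k').1 (hk k').2 i
    have hcki := congrFun hck i
    simp only [hc] at hcki
    by_cases hb : y ((k : ℕ) + 1) i = y 0 i
    · have hb' : decide (y ((k' : ℕ) + 1) i = y 0 i) = true := by
        rw [← hcki]; exact decide_eq_true hb
      rw [hb, ← of_decide_eq_true hb']
    · have hb' : ¬ y ((k' : ℕ) + 1) i = y 0 i := by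
        intro hcon
        exact hb (of_decide_eq_true (by rw [hcki]; exact decide_eq_true hcon))
      rcases h1 with h1 | h1
      · exact absurd h1 hb
      · rcases h2 with h2 | h2
        · exact absurd h2 hb'
        · rw [h1, h2]
  have hkk : (k : ℕ) + 1 = (k' : ℕ) + 1 := hyinj hyeq
  exact hkk' (Fin.ext (by omega))
end

section
/- For 0 < α < π/2, the polar (azimuthal equidistant) projection from the spherical cap of angular radius α on the unit sphere S² to the plane — sending a point at spherical distance r and longitude θ from the center to the planar point with polar coordinates (r, θ) — is a bijection onto the disc of radius α that does not decrease distances and increases them by a factor of at most α/sin α; that is, it is a (1, α/sin α)-bi-Lipschitz map. -/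
open Real RealInnerProductSpace

/-- The intrinsic (spherical) distance between points of the unit sphere. -/
noncomputable def sphDist (p q : EuclideanSpace ℝ (Fin 3)) : ℝ :=
  Real.arccos ⟪p, q⟫

/-- The north pole `(0,0,1)`. -/
noncomputable def northPole : EuclideanSpace ℝ (Fin 3) :=
  (WithLp.equiv 2 (Fin 3 → ℝ)).symm ![0, 0, 1]

/-- The azimuthal equidistant (polar) projection: a point at spherical distance `r`
and longitude `θ` from the north pole goes to the planar point with polar
coordinates `(r, θ)`. -/
noncomputable def polarProj (p : EuclideanSpace ℝ (Fin 3)) : EuclideanSpace ℝ (Fin 2) :=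
  (sphDist p northPole / Real.sqrt (1 - ⟪p, northPole⟫ ^ 2)) •
    (WithLp.equiv 2 (Fin 2 → ℝ)).symm ![p 0, p 1]

open Set Metric

/-! The inverse of the polar projection is `polarLift : P ↦ (sinc ‖P‖ • P, cos ‖P‖)`. Writing
`r = ‖P‖`, `s = ‖Q‖`, `x = ⟪P, Q⟫`, the spherical law of cosines reads
`cos d = cos r cos s + sinc r sinc s x` for the spherical distance `d` of the lifts, while the
planar distance is `e = √(r² + s² - 2x)`.

`d ≤ e`: the difference `cos e - cos d` is convex in `x`, because `t ↦ cos √t` is convex on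
`[0, π²]` (its derivative is `-sinc √t / 2` and `sinc` is antitone on `[0, π]`), and it vanishes
at the extreme values `x = ± r s`.

`e ≤ d / sinc α`: expand `2 (1 - cos d) = (r - s)² sinc ((r - s) / 2)² + 2 sinc r sinc s (r s - x)`
and `e² = (r - s)² + 2 (r s - x)`; every `sinc` here is at least `sinc α`, so
`sinc α ² e² ≤ 2 (1 - cos d) ≤ d²`. -/

namespace Real

lemma sinc_mul_self (x : ℝ) : sinc x * x = sin x := by
  rcases eq_or_ne x 0 with rfl | hx
  · simp
  · rw [sinc_of_ne_zero hx, div_mul_cancel₀ _ hx]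

lemma sinc_pos_of_mem_Ico {x : ℝ} (hx : x ∈ Ico 0 π) : 0 < sinc x := by
  rcases eq_or_lt_of_le hx.1 with rfl | hx₀
  · simp
  · rw [sinc_of_ne_zero hx₀.ne']
    exact div_pos (sin_pos_of_pos_of_lt_pi hx₀ hx.2) hx₀

lemma sinc_nonneg_of_mem_Icc {x : ℝ} (hx : x ∈ Icc 0 π) : 0 ≤ sinc x := by
  rcases eq_or_lt_of_le hx.1 with rfl | hx₀
  · simp
  · rw [sinc_of_ne_zero hx₀.ne']
    exact div_nonneg (sin_nonneg_of_nonneg_of_le_pi hx.1 hx.2) hx.1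

lemma sinc_antitoneOn : AntitoneOn sinc (Icc 0 π) := by
  intro x hx y hy hxy
  rcases eq_or_lt_of_le hx.1 with rfl | hx₀
  · simpa using sinc_le_one y
  have hslope := strictConcaveOn_sin_Icc.concaveOn.slope_anti (x := 0) ⟨le_rfl, pi_pos.le⟩
    (a := x) ⟨hx, hx₀.ne'⟩ (b := y) ⟨hy, (hx₀.trans_le hxy).ne'⟩ hxy
  simpa [slope_def_field, sinc_of_ne_zero hx₀.ne', sinc_of_ne_zero (hx₀.trans_le hxy).ne'] using
    hslope

lemma two_mul_one_sub_cos (x : ℝ) : 2 * (1 - cos x) = x ^ 2 * sinc (x / 2) ^ 2 := by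
  have h := cos_two_mul_eq_one_sub (x / 2)
  rw [mul_div_cancel₀ x two_ne_zero] at h
  rw [h, ← sinc_mul_self (x / 2)]
  ring

end Real

lemma convexOn_cos_sqrt : ConvexOn ℝ (Icc 0 (π ^ 2)) (fun t => cos √t) := by
  have hderiv : ∀ t ∈ Ioo 0 (π ^ 2), HasDerivAt (fun t => cos √t) (-sinc √t / 2) t := by
    intro t ht
    have hs : 0 < √t := sqrt_pos.2 ht.1
    refine ((hasDerivAt_cos √t).comp t (hasDerivAt_sqrt ht.1.ne')).congr_deriv ?_
    rw [sinc_of_ne_zero hs.ne']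
    field_simp
  have hsqrt : ∀ t ∈ Ioo 0 (π ^ 2), √t ∈ Icc 0 π := fun t ht =>
    ⟨sqrt_nonneg t, (sqrt_le_sqrt ht.2.le).trans_eq (sqrt_sq pi_pos.le)⟩
  refine MonotoneOn.convexOn_of_deriv (convex_Icc _ _) (by fun_prop) ?_ ?_ <;> rw [interior_Icc]
  · exact fun t ht => (hderiv t ht).differentiableAt.differentiableWithinAt
  · intro s hs t ht hst
    rw [(hderiv s hs).deriv, (hderiv t ht).deriv]
    linarith [sinc_antitoneOn (hsqrt s hs) (hsqrt t ht) (sqrt_le_sqrt hst)]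

section InnerProductSpace

variable {E : Type*} [NormedAddCommGroup E] [InnerProductSpace ℝ E]

lemma cos_norm_sub_le {u v : E} (h : ‖u‖ + ‖v‖ ≤ π) :
    cos ‖u - v‖ ≤ cos ‖u‖ * cos ‖v‖ + sinc ‖u‖ * sinc ‖v‖ * ⟪u, v⟫ := by
  have hnorm : ‖u - v‖ = √(‖u‖ ^ 2 + ‖v‖ ^ 2 - 2 * ⟪u, v⟫) := by
    rw [← sqrt_sq (norm_nonneg (u - v)), norm_sub_sq_real]
    ring_nf
  set r := ‖u‖
  set s := ‖v‖
  have hr : 0 ≤ r := norm_nonneg u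
  have hs : 0 ≤ s := norm_nonneg v
  set φ : ℝ → ℝ := fun x => cos √(r ^ 2 + s ^ 2 - 2 * x) - sinc r * sinc s * x with hφ
  have hφ_convex : ConvexOn ℝ (Icc (-(r * s)) (r * s)) φ := by
    have hmaps : ∀ x ∈ Icc (-(r * s)) (r * s), r ^ 2 + s ^ 2 - 2 * x ∈ Icc 0 (π ^ 2) := by
      rintro x ⟨hx₁, hx₂⟩
      constructor <;> nlinarith [sq_nonneg (r - s), mul_nonneg hr hs]
    refine ⟨convex_Icc _ _, fun x hx y hy a b ha hb hab => ?_⟩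
    have hcomb : r ^ 2 + s ^ 2 - 2 * (a * x + b * y) =
        a * (r ^ 2 + s ^ 2 - 2 * x) + b * (r ^ 2 + s ^ 2 - 2 * y) := by
      linear_combination (r ^ 2 + s ^ 2) * hab.symm
    have := convexOn_cos_sqrt.2 (hmaps x hx) (hmaps y hy) ha hb hab
    simp only [hφ, smul_eq_mul, hcomb] at this ⊢
    linear_combination this
  have hφ_left : φ (-(r * s)) = cos r * cos s := by
    have : r ^ 2 + s ^ 2 - 2 * -(r * s) = (r + s) ^ 2 := by ring
    simp only [hφ, this, sqrt_sq (add_nonneg hr hs), cos_add, ← sinc_mul_self r, ← sinc_mul_self s]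
    ring
  have hφ_right : φ (r * s) = cos r * cos s := by
    have : r ^ 2 + s ^ 2 - 2 * (r * s) = (r - s) ^ 2 := by ring
    simp only [hφ, this, sqrt_sq_eq_abs, cos_abs, cos_sub, ← sinc_mul_self r, ← sinc_mul_self s]
    ring
  have hinner : ⟪u, v⟫ ∈ Icc (-(r * s)) (r * s) := abs_le.1 (abs_real_inner_le_norm u v)
  have hrs : -(r * s) ≤ r * s := by nlinarith [mul_nonneg hr hs]
  have hmax := hφ_convex.le_max_of_mem_Icc (left_mem_Icc.2 hrs) (right_mem_Icc.2 hrs) hinner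
  rw [hφ_left, hφ_right, max_self, hφ] at hmax
  rw [hnorm]
  linarith

lemma sinc_sq_mul_norm_sub_sq_le {u v : E} {a : ℝ} (hu : ‖u‖ ≤ a) (hv : ‖v‖ ≤ a) (ha : a ≤ π) :
    sinc a ^ 2 * ‖u - v‖ ^ 2 ≤
      2 * (1 - (cos ‖u‖ * cos ‖v‖ + sinc ‖u‖ * sinc ‖v‖ * ⟪u, v⟫)) := by
  set r := ‖u‖
  set s := ‖v‖
  have hr : 0 ≤ r := norm_nonneg u
  have hs : 0 ≤ s := norm_nonneg v
  have hmem : ∀ {t}, 0 ≤ t → t ≤ a → t ∈ Icc 0 π := fun h₀ h => ⟨h₀, h.trans ha⟩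
  have ha_mem : a ∈ Icc 0 π := hmem (hr.trans hu) le_rfl
  have hsinc_le : ∀ {t}, 0 ≤ t → t ≤ a → sinc a ≤ sinc t := fun h₀ h =>
    sinc_antitoneOn (hmem h₀ h) ha_mem h
  have hsinc_half : sinc a ≤ sinc ((r - s) / 2) := by
    rcases le_total r s with h | h
    · rw [← sinc_neg ((r - s) / 2)]
      exact hsinc_le (by linarith) (by linarith)
    · exact hsinc_le (by linarith) (by linarith)
  have hsinc_a := sinc_nonneg_of_mem_Icc ha_mem
  have hrs : ⟪u, v⟫ ≤ r * s := real_inner_le_norm u v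
  have hexpand : 2 * (1 - (cos r * cos s + sinc r * sinc s * ⟪u, v⟫)) =
      (r - s) ^ 2 * sinc ((r - s) / 2) ^ 2 + 2 * (sinc r * sinc s) * (r * s - ⟪u, v⟫) := by
    rw [← two_mul_one_sub_cos, cos_sub, ← sinc_mul_self r, ← sinc_mul_self s]
    ring
  rw [hexpand, norm_sub_sq_real]
  have hsq_half : sinc a ^ 2 ≤ sinc ((r - s) / 2) ^ 2 := pow_le_pow_left₀ hsinc_a hsinc_half 2
  have hsq_rs : sinc a ^ 2 ≤ sinc r * sinc s := by
    rw [sq]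
    exact mul_le_mul (hsinc_le hr hu) (hsinc_le hs hv) hsinc_a (hsinc_a.trans (hsinc_le hr hu))
  nlinarith [mul_le_mul_of_nonneg_left hsq_half (sq_nonneg (r - s)),
    mul_le_mul_of_nonneg_right hsq_rs (sub_nonneg.2 hrs)]

end InnerProductSpace

-- The exponential map of the unit sphere at the north pole.
noncomputable def polarLift (P : EuclideanSpace ℝ (Fin 2)) : EuclideanSpace ℝ (Fin 3) :=
  !₂[sinc ‖P‖ * P 0, sinc ‖P‖ * P 1, cos ‖P‖]

lemma inner_fin_two (P Q : EuclideanSpace ℝ (Fin 2)) : ⟪P, Q⟫ = P 0 * Q 0 + P 1 * Q 1 := by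
  simp [PiLp.inner_apply, Fin.sum_univ_two, mul_comm]

lemma inner_fin_three (p q : EuclideanSpace ℝ (Fin 3)) :
    ⟪p, q⟫ = p 0 * q 0 + p 1 * q 1 + p 2 * q 2 := by
  simp [PiLp.inner_apply, Fin.sum_univ_three, mul_comm]

lemma inner_northPole (p : EuclideanSpace ℝ (Fin 3)) : ⟪p, northPole⟫ = p 2 := by
  simp [inner_fin_three, northPole]

lemma inner_polarLift (P Q : EuclideanSpace ℝ (Fin 2)) :
    ⟪polarLift P, polarLift Q⟫ = cos ‖P‖ * cos ‖Q‖ + sinc ‖P‖ * sinc ‖Q‖ * ⟪P, Q⟫ := by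
  simp only [polarLift, inner_fin_three, inner_fin_two, Matrix.cons_val_zero,
    Matrix.cons_val_one, Matrix.cons_val]
  ring

lemma norm_polarLift (P : EuclideanSpace ℝ (Fin 2)) : ‖polarLift P‖ = 1 := by
  have h : ⟪polarLift P, polarLift P⟫ = 1 := by
    rw [inner_polarLift, real_inner_self_eq_norm_sq, ← cos_sq_add_sin_sq ‖P‖, ← sinc_mul_self]
    ring
  rwa [real_inner_self_eq_norm_sq, pow_eq_one_iff_of_nonneg (norm_nonneg _) two_ne_zero] at h

lemma sphDist_polarLift_northPole {P : EuclideanSpace ℝ (Fin 2)} (hP : ‖P‖ ≤ π) :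
    sphDist (polarLift P) northPole = ‖P‖ := by
  simp [sphDist, inner_northPole, polarLift, arccos_cos (norm_nonneg P) hP]

lemma polarProj_polarLift {P : EuclideanSpace ℝ (Fin 2)} (hP : ‖P‖ < π) :
    polarProj (polarLift P) = P := by
  rcases eq_or_ne P 0 with rfl | hP₀
  · simp [polarProj, polarLift]
  have hr : 0 < ‖P‖ := norm_pos_iff.2 hP₀
  have hsin : 0 < sin ‖P‖ := sin_pos_of_pos_of_lt_pi hr hP
  have hscale : ‖P‖ / sin ‖P‖ * sinc ‖P‖ = 1 := by
    rw [sinc_of_ne_zero hr.ne']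
    field_simp
  have hsqrt : √(1 - cos ‖P‖ ^ 2) = sin ‖P‖ :=
    (sin_eq_sqrt_one_sub_cos_sq hr.le hP.le).symm
  rw [polarProj, sphDist_polarLift_northPole hP.le, inner_northPole]
  ext i
  fin_cases i <;> simp [polarLift, hsqrt, ← mul_assoc, hscale]

section UnitSphere

variable {p : EuclideanSpace ℝ (Fin 3)}

lemma sq_add_sq_add_sq_of_norm_eq_one (hp : ‖p‖ = 1) : p 0 ^ 2 + p 1 ^ 2 + p 2 ^ 2 = 1 := by
  have h := real_inner_self_eq_norm_sq p
  rw [inner_fin_three, hp] at h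
  linear_combination h

lemma cos_sphDist_northPole (hp : ‖p‖ = 1) : cos (sphDist p northPole) = p 2 := by
  have h := sq_add_sq_add_sq_of_norm_eq_one hp
  rw [sphDist, inner_northPole, cos_arccos] <;> nlinarith

lemma sinc_smul_polarProj (hp : ‖p‖ = 1) (hπ : sphDist p northPole < π) :
    sinc (sphDist p northPole) • polarProj p = !₂[p 0, p 1] := by
  have hsum := sq_add_sq_add_sq_of_norm_eq_one hp
  have hcos := cos_sphDist_northPole hp
  have hr₀ : 0 ≤ sphDist p northPole := arccos_nonneg _
  set r := sphDist p northPole with hr_def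
  have hsqrt : √(1 - ⟪p, northPole⟫ ^ 2) = sin r := by
    rw [hr_def, sphDist, sin_arccos]
  rcases hr₀.eq_or_lt with hr | hr
  · rw [← hr, cos_zero] at hcos
    have h0 : p 0 = 0 := by nlinarith
    have h1 : p 1 = 0 := by nlinarith
    ext i
    fin_cases i <;> simp [polarProj, ← hr_def, ← hr, h0, h1]
  have hscale : sinc r * (r / sin r) = 1 := by
    have := sin_pos_of_pos_of_lt_pi hr hπ
    rw [sinc_of_ne_zero hr.ne']
    field_simp
  rw [polarProj, ← hr_def, hsqrt, smul_smul, hscale, one_smul]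
  rfl

lemma norm_polarProj (hp : ‖p‖ = 1) (hπ : sphDist p northPole < π) :
    ‖polarProj p‖ = sphDist p northPole := by
  have hsmul := sinc_smul_polarProj hp hπ
  have hsum := sq_add_sq_add_sq_of_norm_eq_one hp
  have hcos := cos_sphDist_northPole hp
  have hr₀ : 0 ≤ sphDist p northPole := arccos_nonneg _
  set r := sphDist p northPole
  have hsinc : 0 < sinc r := sinc_pos_of_mem_Ico ⟨hr₀, hπ⟩
  have hsq : (sinc r * ‖polarProj p‖) ^ 2 = (sinc r * r) ^ 2 := by
    rw [← norm_of_nonneg hsinc.le, ← norm_smul, hsmul, norm_of_nonneg hsinc.le, sinc_mul_self,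
      ← real_inner_self_eq_norm_sq, inner_fin_two, sin_sq, hcos]
    simp only [Matrix.cons_val_zero, Matrix.cons_val_one, Matrix.cons_val_fin_one]
    linear_combination hsum
  exact mul_left_cancel₀ hsinc.ne' ((sq_eq_sq₀ (by positivity) (by positivity)).1 hsq)

lemma polarLift_polarProj (hp : ‖p‖ = 1) (hπ : sphDist p northPole < π) :
    polarLift (polarProj p) = p := by
  have hsmul := sinc_smul_polarProj hp hπ
  ext i
  fin_cases i
  · simpa [polarLift, norm_polarProj hp hπ] using congrArg (· 0) hsmul
  · simpa [polarLift, norm_polarProj hp hπ] using congrArg (· 1) hsmul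
  · simp [polarLift, norm_polarProj hp hπ, cos_sphDist_northPole hp]

end UnitSphere

lemma sphDist_polarLift_le_dist {P Q : EuclideanSpace ℝ (Fin 2)} (h : ‖P‖ + ‖Q‖ ≤ π) :
    sphDist (polarLift P) (polarLift Q) ≤ dist P Q := by
  rw [sphDist, inner_polarLift, dist_eq_norm]
  calc arccos _ ≤ arccos (cos ‖P - Q‖) := arccos_le_arccos (cos_norm_sub_le h)
    _ = ‖P - Q‖ := arccos_cos (norm_nonneg _) ((norm_sub_le P Q).trans h)

lemma dist_le_mul_sphDist_polarLift {α : ℝ} (hα₀ : 0 < α) (hα : α < π)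
    {P Q : EuclideanSpace ℝ (Fin 2)} (hP : ‖P‖ ≤ α) (hQ : ‖Q‖ ≤ α) :
    dist P Q ≤ α / sin α * sphDist (polarLift P) (polarLift Q) := by
  set d := sphDist (polarLift P) (polarLift Q)
  have hinner := abs_le.1 (abs_real_inner_le_norm (polarLift P) (polarLift Q))
  simp only [norm_polarLift, mul_one] at hinner
  have hcos : cos d = ⟪polarLift P, polarLift Q⟫ := cos_arccos hinner.1 hinner.2
  have hsinc : 0 < sinc α := sinc_pos_of_mem_Ico ⟨hα₀.le, hα⟩
  have hsq : (sinc α * dist P Q) ^ 2 ≤ d ^ 2 :=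
    calc (sinc α * dist P Q) ^ 2 = sinc α ^ 2 * ‖P - Q‖ ^ 2 := by rw [dist_eq_norm]; ring
      _ ≤ 2 * (1 - cos d) := by
        rw [hcos, inner_polarLift]; exact sinc_sq_mul_norm_sub_sq_le hP hQ hα.le
      _ ≤ d ^ 2 := by linarith [one_sub_sq_div_two_le_cos (x := d)]
  have hle := (sq_le_sq₀ (by positivity) (arccos_nonneg _)).1 hsq
  have hsin : 0 < sin α := sin_pos_of_pos_of_lt_pi hα₀ hα
  rw [sinc_of_ne_zero hα₀.ne'] at hle
  calc dist P Q = α / sin α * (sin α / α * dist P Q) := by field_simp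
    _ ≤ α / sin α * d := mul_le_mul_of_nonneg_left hle (by positivity)

/-- For `0 < α < π/2`, the polar projection from the spherical cap of angular radius
`α` on the unit sphere is a bijection onto the disc of radius `α` that does not
decrease distances and increases them by a factor at most `α / sin α`; i.e., it is a
`(1, α / sin α)`-bi-Lipschitz map (spherical distance on the cap, Euclidean in the
plane). -/
theorem stmt_12 (α : ℝ) (hα₀ : 0 < α) (hα : α < π / 2) :
    Set.BijOn polarProj
        {p : EuclideanSpace ℝ (Fin 3) | p ∈ Metric.sphere (0 : EuclideanSpace ℝ (Fin 3)) 1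
          ∧ sphDist p northPole ≤ α}
        (Metric.closedBall (0 : EuclideanSpace ℝ (Fin 2)) α) ∧
      ∀ p ∈ {p : EuclideanSpace ℝ (Fin 3) |
          p ∈ Metric.sphere (0 : EuclideanSpace ℝ (Fin 3)) 1 ∧ sphDist p northPole ≤ α},
      ∀ q ∈ {p : EuclideanSpace ℝ (Fin 3) |
          p ∈ Metric.sphere (0 : EuclideanSpace ℝ (Fin 3)) 1 ∧ sphDist p northPole ≤ α},
        sphDist p q ≤ dist (polarProj p) (polarProj q) ∧
          dist (polarProj p) (polarProj q) ≤ (α / Real.sin α) * sphDist p q := by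
  have hαπ : α < π := by linarith [pi_pos]
  set cap := {p : EuclideanSpace ℝ (Fin 3) | p ∈ sphere 0 1 ∧ sphDist p northPole ≤ α}
  have hinv : InvOn polarLift polarProj cap (closedBall 0 α) :=
    ⟨fun p hp => polarLift_polarProj (mem_sphere_zero_iff_norm.1 hp.1) (hp.2.trans_lt hαπ),
      fun P hP => polarProj_polarLift ((mem_closedBall_zero_iff.1 hP).trans_lt hαπ)⟩
  have hproj : MapsTo polarProj cap (closedBall 0 α) := fun p hp => by
    rw [mem_closedBall_zero_iff,
      norm_polarProj (mem_sphere_zero_iff_norm.1 hp.1) (hp.2.trans_lt hαπ)]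
    exact hp.2
  have hlift : MapsTo polarLift (closedBall 0 α) cap := fun P hP => by
    rw [mem_closedBall_zero_iff] at hP
    exact ⟨mem_sphere_zero_iff_norm.2 (norm_polarLift P),
      (sphDist_polarLift_northPole (hP.trans hαπ.le)).trans_le hP⟩
  refine ⟨hinv.bijOn hproj hlift, fun p hp q hq => ?_⟩
  have hsurj := (hinv.symm.bijOn hlift hproj).surjOn
  obtain ⟨P, hP, rfl⟩ := hsurj hp
  obtain ⟨Q, hQ, rfl⟩ := hsurj hq
  rw [hinv.2 hP, hinv.2 hQ]
  rw [mem_closedBall_zero_iff] at hP hQ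
  exact ⟨sphDist_polarLift_le_dist (by linarith),
    dist_le_mul_sphDist_polarLift hα₀ hαπ hP hQ⟩
end
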